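/- arXiv:1601.03199 — 2 statements merged into one kernel-verified Lean document; each statement's English description precedes it below -/
import Mathlib

section
/- For all x > 0 the Turán type inequality I₁²(x) − I₀(x)·I₂(x) < (1/x)·I₀(x)·I₁(x) holds. -/
open Real Filter Topology

/-- The modified Bessel function of the first kind of real order `ν`. -/
noncomputable def besselI (ν x : ℝ) : ℝ :=
  ∑' m : ℕ, (x / 2) ^ (2 * (m : ℝ) + ν) / ((m.factorial : ℝ) * Real.Gamma ((m : ℝ) + ν + 1))

/-- `Ψ_ν(x) = I_{ν+1}(x) / I_ν(x)`. -/
noncomputable def psi (ν x : ℝ) : ℝ := besselI (ν + 1) x / besselI ν x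

/-! For integer orders the Cauchy product of the two power series and Vandermonde's identity give
`I_μ(x) I_ν(x) = ∑ₙ C(2n+μ+ν, n) / ((n+μ)! (n+ν)!) · (x/2)^(2n+μ+ν)`.
Comparing the coefficients of `(x/2)^(2n+2)` on both sides reduces the inequality to
`2 C(2n+2, n) ≤ C(2n+3, n+1)`, which is Pascal's rule together with `C(2n+2, n) ≤ C(2n+2, n+1)`.
It is strict because the lowest term `1/2` of `(1/x) I₀ I₁` has no counterpart on the left. -/

open Finset Nat

noncomputable def besselITerm (ν : ℕ) (t : ℝ) (m : ℕ) : ℝ :=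
  t ^ (2 * m + ν) / (m ! * (m + ν)! : ℝ)

lemma besselI_natCast_eq_tsum (ν : ℕ) (x : ℝ) :
    besselI ν x = ∑' m, besselITerm ν (x / 2) m := by
  refine tsum_congr fun m => ?_
  rw [show 2 * (m : ℝ) + ν = ((2 * m + ν : ℕ) : ℝ) by push_cast; ring, rpow_natCast,
    show (m : ℝ) + ν + 1 = ((m + ν : ℕ) : ℝ) + 1 by push_cast; ring, Gamma_nat_eq_factorial,
    besselITerm]

lemma summable_norm_besselITerm (ν : ℕ) (t : ℝ) : Summable fun m => ‖besselITerm ν t m‖ := by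
  refine .of_nonneg_of_le (fun _ => norm_nonneg _) (fun m => ?_)
    ((Real.summable_pow_div_factorial (t ^ 2)).mul_left (|t| ^ ν))
  rw [besselITerm, norm_div, norm_pow, norm_eq_abs, pow_add, pow_mul, sq_abs, mul_comm,
    mul_div_assoc, Real.norm_of_nonneg (by positivity)]
  gcongr
  exact le_mul_of_one_le_right (by positivity) (mod_cast (m + ν).factorial_pos)

lemma factorial_add_eq_choose_mul (a b : ℕ) :
    ((a + b)! : ℝ) = (a + b).choose a * a ! * b ! := by
  rw [Nat.choose_symm_add]; exact_mod_cast (add_choose_mul_factorial_mul_factorial a b).symm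

lemma besselITerm_mul_besselITerm (μ ν : ℕ) (t : ℝ) {k j n : ℕ} (h : k + j = n) :
    besselITerm μ t k * besselITerm ν t j =
      t ^ (2 * n + μ + ν) * ((n + ν).choose k * (n + μ).choose j) / ((n + μ)! * (n + ν)!) := by
  subst h
  rw [besselITerm, besselITerm, show k + j + ν = k + (j + ν) by ring,
    show k + j + μ = j + (k + μ) by ring, factorial_add_eq_choose_mul k (j + ν),
    factorial_add_eq_choose_mul j (k + μ)]
  have : ((k + (j + ν)).choose k : ℝ) ≠ 0 := mod_cast (Nat.choose_pos (by omega)).ne'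
  have : ((j + (k + μ)).choose j : ℝ) ≠ 0 := mod_cast (Nat.choose_pos (by omega)).ne'
  field_simp
  ring

noncomputable def besselIProdCoeff (μ ν n : ℕ) : ℝ :=
  (2 * n + μ + ν).choose n / ((n + μ)! * (n + ν)! : ℝ)

lemma sum_antidiagonal_besselITerm_mul (μ ν : ℕ) (t : ℝ) (n : ℕ) :
    ∑ p ∈ antidiagonal n, besselITerm μ t p.1 * besselITerm ν t p.2 =
      besselIProdCoeff μ ν n * t ^ (2 * n + μ + ν) := by
  have vandermonde : ((2 * n + μ + ν).choose n : ℝ) =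
      ∑ p ∈ antidiagonal n, ((n + ν).choose p.1 * (n + μ).choose p.2 : ℝ) := by
    rw [show 2 * n + μ + ν = (n + ν) + (n + μ) by ring, Nat.add_choose_eq]; push_cast; rfl
  rw [sum_congr rfl fun p hp => besselITerm_mul_besselITerm μ ν t (mem_antidiagonal.mp hp),
    ← sum_div, ← mul_sum, besselIProdCoeff, vandermonde]
  ring

theorem hasSum_besselI_mul_besselI (μ ν : ℕ) (x : ℝ) :
    HasSum (fun n => besselIProdCoeff μ ν n * (x / 2) ^ (2 * n + μ + ν))
      (besselI μ x * besselI ν x) := by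
  have hμ := summable_norm_besselITerm μ (x / 2)
  have hν := summable_norm_besselITerm ν (x / 2)
  simp_rw [← sum_antidiagonal_besselITerm_mul]
  rw [besselI_natCast_eq_tsum, besselI_natCast_eq_tsum,
    tsum_mul_tsum_eq_tsum_sum_antidiagonal_of_summable_norm hμ hν]
  exact (summable_sum_mul_antidiagonal_of_summable_norm' hμ hμ.of_norm hν hν.of_norm).hasSum

lemma besselIProdCoeff_one_one (n : ℕ) :
    besselIProdCoeff 1 1 n =
      besselIProdCoeff 0 2 n + (2 * n + 2).choose n / ((n + 1)! * (n + 2)! : ℝ) := by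
  simp only [besselIProdCoeff, add_zero, factorial_succ (n + 1), factorial_succ n]
  field_simp
  push_cast
  ring

lemma two_mul_choose_le_choose_succ (n : ℕ) :
    2 * (2 * n + 2).choose n ≤ (2 * n + 3).choose (n + 1) := by
  have middle := Nat.choose_le_middle n (2 * n + 2)
  rw [show (2 * n + 2) / 2 = n + 1 by omega] at middle
  rw [Nat.choose_succ_succ']
  omega

lemma besselIProdCoeff_one_one_le (n : ℕ) :
    besselIProdCoeff 1 1 n ≤ besselIProdCoeff 0 2 n + besselIProdCoeff 0 1 (n + 1) / 2 := by
  have hC : (2 * ((2 * n + 2).choose n : ℝ)) ≤ (2 * n + 3).choose (n + 1) :=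
    mod_cast two_mul_choose_le_choose_succ n
  rw [besselIProdCoeff_one_one]
  refine (add_le_add_iff_left _).mpr ?_
  change _ ≤ ((2 * n + 3).choose (n + 1) : ℝ) / ((n + 1)! * (n + 2)!) / 2
  rw [div_right_comm]
  gcongr
  linarith

theorem stmt_2 (x : ℝ) (hx : 0 < x) :
    (besselI 1 x) ^ 2 - besselI 0 x * besselI 2 x <
      (1 / x) * besselI 0 x * besselI 1 x := by
  have h11 := hasSum_besselI_mul_besselI 1 1 x
  have h02 := hasSum_besselI_mul_besselI 0 2 x
  have h01 := (hasSum_nat_add_iff' 1).mpr (hasSum_besselI_mul_besselI 0 1 x)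
  have hle := hasSum_le (fun n => ?_) h11 (h02.add (h01.mul_left (1 / x)))
  · have h0 : besselIProdCoeff 0 1 0 = 1 := by simp [besselIProdCoeff]
    rw [sum_range_one, h0] at hle
    have hlowest : 1 / x * (besselI 0 x * besselI 1 x - 1 * (x / 2) ^ (2 * 0 + 0 + 1)) =
        1 / x * besselI 0 x * besselI 1 x - 1 / 2 := by
      field_simp; ring
    linarith
  · have hshift : 1 / x * (besselIProdCoeff 0 1 (n + 1) * (x / 2) ^ (2 * (n + 1) + 0 + 1)) =
        besselIProdCoeff 0 1 (n + 1) / 2 * (x / 2) ^ (2 * n + 2) := by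
      field_simp; ring
    rw [hshift, ← add_mul]
    exact mul_le_mul_of_nonneg_right (besselIProdCoeff_one_one_le n) (by positivity)
end

section
/- Let K > 1 and let r > 0 satisfy r = Ψ(2Kr), where Ψ(x) = I₁(x)/I₀(x). Then r < (1 − 1/K)^{1/4}. -/
/-!
With `t = x² / 4` one has `I_k(x) = (x / 2)^k S_k(t)` for the entire series
`S_k(t) = ∑ t^m / (m! (m + k)!)` (`besselSeries k`), which satisfy `S_k' = S_{k+1}` and
`t S_{k+2} + (k + 1) S_{k+1} = S_k`. Hence `Ψ = I₁ / I₀` solves the Riccati equation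
`Ψ' = 1 - Ψ / x - Ψ²`. The gap `g(x) = 1 - 2 Ψ(x) / x - Ψ(x)⁴` is positive for `x ≤ 1` by crude
bounds on the series, and at any zero of `g` the Riccati equation gives `g' = Ψ (1 - Ψ²)³ > 0`,
so `g` never vanishes. At `x = 2 K r`, where `Ψ = r`, positivity of `g` reads `r⁴ < 1 - 1 / K`.
-/

open Real Filter Topology

open Set
open scoped Nat

theorem summable_mul_pow_of_abs_le_inv_factorial {a : ℕ → ℝ} (ha : ∀ m, |a m| ≤ (m ! : ℝ)⁻¹)
    (t : ℝ) : Summable fun m => a m * t ^ m := by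
  refine .of_norm_bounded (Real.summable_pow_div_factorial |t|) fun m => ?_
  rw [norm_mul, norm_pow, Real.norm_eq_abs, Real.norm_eq_abs, div_eq_inv_mul]
  exact mul_le_mul_of_nonneg_right (ha m) (by positivity)

theorem hasDerivAt_tsum_mul_pow_of_abs_le_inv_factorial {a : ℕ → ℝ}
    (ha : ∀ m, |a m| ≤ (m ! : ℝ)⁻¹) (t : ℝ) :
    HasDerivAt (fun s => ∑' m, a m * s ^ m) (∑' m, a (m + 1) * (m + 1) * t ^ m) t := by
  -- Splitting off the constant term leaves exponents `m + 1`, whose derivatives need no `m - 1`.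
  have hshift : (fun s => ∑' m, a m * s ^ m) = fun s => a 0 + ∑' m, a (m + 1) * s ^ (m + 1) :=
    funext fun s => by simpa using (summable_mul_pow_of_abs_le_inv_factorial ha s).tsum_eq_zero_add
  rw [hshift]
  refine HasDerivAt.const_add _ ?_
  have hbound : ∀ m (y : ℝ), y ∈ Metric.ball 0 (|t| + 1) →
      ‖a (m + 1) * ((m + 1 : ℕ) * y ^ m)‖ ≤ (|t| + 1) ^ m / m ! := by
    intro m y hy
    rw [mem_ball_zero_iff, Real.norm_eq_abs] at hy
    have hfac : ((m + 1)! : ℝ)⁻¹ * (m + 1 : ℕ) = (m ! : ℝ)⁻¹ := by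
      rw [Nat.factorial_succ, Nat.cast_mul, mul_inv, mul_comm, ← mul_assoc,
        mul_inv_cancel₀ (by positivity), one_mul]
    calc ‖a (m + 1) * ((m + 1 : ℕ) * y ^ m)‖ = |a (m + 1)| * (m + 1 : ℕ) * |y| ^ m := by
          rw [Real.norm_eq_abs, abs_mul, abs_mul, abs_pow, Nat.abs_cast, mul_assoc]
      _ ≤ ((m + 1)! : ℝ)⁻¹ * (m + 1 : ℕ) * (|t| + 1) ^ m := by gcongr; exact ha _
      _ = (|t| + 1) ^ m / m ! := by rw [hfac, div_eq_inv_mul]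
  have key := hasDerivAt_tsum_of_isPreconnected (Real.summable_pow_div_factorial (|t| + 1))
    Metric.isOpen_ball (convex_ball (0 : ℝ) _).isPreconnected
    (g := fun m s => a (m + 1) * s ^ (m + 1))
    (fun m y _ => (hasDerivAt_pow (m + 1) y).const_mul (a (m + 1))) hbound
    (Metric.mem_ball_self (by positivity))
    ((summable_nat_add_iff 1).2 (summable_mul_pow_of_abs_le_inv_factorial ha 0))
    (mem_ball_zero_iff.2 (by rw [Real.norm_eq_abs]; linarith))
  refine key.congr_deriv (tsum_congr fun m => ?_)
  rw [Nat.add_sub_cancel]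
  push_cast
  ring

theorem pos_of_hasDerivAt_pos_at_zeros {f f' : ℝ → ℝ} {a x : ℝ}
    (hf : ∀ y, a ≤ y → HasDerivAt f (f' y) y) (ha : 0 < f a)
    (hzero : ∀ y, a < y → f y = 0 → 0 < f' y) (hx : a ≤ x) : 0 < f x := by
  -- At the first point `c ≥ a` with `f c ≤ 0`, the left difference quotients are `≤ 0`.
  by_contra! hx0
  set S := Ici a ∩ f ⁻¹' Iic 0
  have hcont : ContinuousOn f (Ici a) := fun y hy => (hf y hy).continuousAt.continuousWithinAt
  have hSbdd : BddBelow S := ⟨a, fun y hy => hy.1⟩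
  set c := sInf S
  have hcS : c ∈ S :=
    (hcont.preimage_isClosed_of_isClosed isClosed_Ici isClosed_Iic).csInf_mem ⟨x, hx, hx0⟩ hSbdd
  obtain ⟨hac, hc0⟩ := hcS
  have hac' : a < c := hac.lt_of_ne fun h => hc0.not_gt (h ▸ ha)
  have hleft : ∀ᶠ y in 𝓝[<] c, y < c ∧ 0 < f y := by
    filter_upwards [Ioo_mem_nhdsLT hac'] with y hy
    refine ⟨hy.2, ?_⟩
    by_contra! h
    exact (csInf_le hSbdd ⟨hy.1.le, h⟩).not_gt hy.2
  have hc : f c = 0 :=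
    hc0.antisymm <| ge_of_tendsto ((hf c hac).continuousAt.tendsto.mono_left nhdsWithin_le_nhds)
      (hleft.mono fun _ hy => hy.2.le)
  have hslope : f' c ≤ 0 := by
    have h := (hf c hac).hasDerivWithinAt (s := Iio c)
    rw [hasDerivWithinAt_iff_tendsto_slope, sdiff_singleton_eq_self (by simp)] at h
    refine le_of_tendsto h (hleft.mono fun y hy => ?_)
    rw [slope_def_field, hc, sub_zero]
    exact div_nonpos_of_nonneg_of_nonpos hy.2.le (sub_nonpos.2 hy.1.le)
  exact (hzero c hac' hc).not_ge hslope

noncomputable def besselCoeff (k m : ℕ) : ℝ := ((m ! : ℝ) * (m + k)!)⁻¹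

noncomputable def besselSeries (k : ℕ) (t : ℝ) : ℝ := ∑' m, besselCoeff k m * t ^ m

theorem besselCoeff_pos (k m : ℕ) : 0 < besselCoeff k m := by
  unfold besselCoeff; positivity

theorem besselCoeff_le_inv_factorial (k m : ℕ) : besselCoeff k m ≤ (m ! : ℝ)⁻¹ := by
  rw [besselCoeff, mul_inv]
  refine mul_le_of_le_one_right (by positivity) (inv_le_one_of_one_le₀ ?_)
  exact_mod_cast Nat.one_le_iff_ne_zero.2 (Nat.factorial_ne_zero _)

theorem besselCoeff_le_one (k m : ℕ) : besselCoeff k m ≤ 1 :=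
  (besselCoeff_le_inv_factorial k m).trans
    (inv_le_one_of_one_le₀ (by exact_mod_cast Nat.one_le_iff_ne_zero.2 (Nat.factorial_ne_zero _)))

theorem besselCoeff_succ_le (k m : ℕ) : besselCoeff (k + 1) m ≤ besselCoeff k m := by
  unfold besselCoeff
  gcongr
  omega

theorem besselCoeff_succ_mul (k m : ℕ) :
    besselCoeff k (m + 1) * (m + 1) = besselCoeff (k + 1) m := by
  rw [besselCoeff, besselCoeff, show m + 1 + k = m + (k + 1) by omega, Nat.factorial_succ]
  push_cast
  field_simp

theorem besselCoeff_succ_sub (k m : ℕ) :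
    besselCoeff k (m + 1) - (k + 1) * besselCoeff (k + 1) (m + 1) = besselCoeff (k + 2) m := by
  rw [besselCoeff, besselCoeff, besselCoeff, show m + 1 + k = m + k + 1 by omega,
    show m + 1 + (k + 1) = m + k + 1 + 1 by omega, show m + (k + 2) = m + k + 1 + 1 by omega,
    Nat.factorial_succ (m + k + 1), Nat.factorial_succ m]
  push_cast
  field_simp
  ring

theorem summable_besselSeries (k : ℕ) (t : ℝ) : Summable fun m => besselCoeff k m * t ^ m :=
  summable_mul_pow_of_abs_le_inv_factorial
    (fun m => (abs_of_pos (besselCoeff_pos k m)).trans_le (besselCoeff_le_inv_factorial k m)) t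

theorem hasDerivAt_besselSeries (k : ℕ) (t : ℝ) :
    HasDerivAt (besselSeries k) (besselSeries (k + 1) t) t := by
  have h := hasDerivAt_tsum_mul_pow_of_abs_le_inv_factorial
    (fun m => (abs_of_pos (besselCoeff_pos k m)).trans_le (besselCoeff_le_inv_factorial k m)) t
  simp only [besselCoeff_succ_mul] at h
  exact h

theorem inv_factorial_le_besselSeries (k : ℕ) {t : ℝ} (ht : 0 ≤ t) :
    (k ! : ℝ)⁻¹ ≤ besselSeries k t := by
  have h := (summable_besselSeries k t).le_tsum 0 fun m _ => by
    have := besselCoeff_pos k m; positivity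
  calc (k ! : ℝ)⁻¹ = besselCoeff k 0 * t ^ 0 := by simp [besselCoeff]
    _ ≤ besselSeries k t := h

theorem besselSeries_pos (k : ℕ) {t : ℝ} (ht : 0 ≤ t) : 0 < besselSeries k t :=
  (inv_pos.2 (by positivity)).trans_le (inv_factorial_le_besselSeries k ht)

theorem besselSeries_succ_le (k : ℕ) {t : ℝ} (ht : 0 ≤ t) :
    besselSeries (k + 1) t ≤ besselSeries k t :=
  (summable_besselSeries (k + 1) t).tsum_le_tsum
    (fun m => mul_le_mul_of_nonneg_right (besselCoeff_succ_le k m) (by positivity))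
    (summable_besselSeries k t)

theorem besselSeries_le_inv_one_sub (k : ℕ) {t : ℝ} (ht : 0 ≤ t) (ht1 : t < 1) :
    besselSeries k t ≤ (1 - t)⁻¹ := by
  rw [← tsum_geometric_of_lt_one ht ht1]
  refine (summable_besselSeries k t).tsum_le_tsum (fun m => ?_)
    (summable_geometric_of_lt_one ht ht1)
  exact mul_le_of_le_one_left (by positivity) (besselCoeff_le_one k m)

theorem besselSeries_recurrence (k : ℕ) (t : ℝ) :
    t * besselSeries (k + 2) t + (k + 1) * besselSeries (k + 1) t = besselSeries k t := by
  have hs : Summable fun m => (besselCoeff k m - (k + 1) * besselCoeff (k + 1) m) * t ^ m := by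
    simpa only [sub_mul, mul_assoc] using
      (summable_besselSeries k t).sub ((summable_besselSeries (k + 1) t).mul_left ((k : ℝ) + 1))
  have hzero : besselCoeff k 0 - (k + 1) * besselCoeff (k + 1) 0 = 0 := by
    simp only [besselCoeff, Nat.factorial_succ, zero_add, Nat.factorial_zero]
    push_cast
    field_simp
    ring
  rw [← eq_sub_iff_add_eq]
  calc t * besselSeries (k + 2) t
      = ∑' m, (besselCoeff k (m + 1) - (k + 1) * besselCoeff (k + 1) (m + 1)) * t ^ (m + 1) := by
        rw [besselSeries, ← tsum_mul_left]
        exact tsum_congr fun m => by rw [besselCoeff_succ_sub]; ring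
    _ = ∑' m, (besselCoeff k m - (k + 1) * besselCoeff (k + 1) m) * t ^ m := by
        rw [hs.tsum_eq_zero_add, hzero, zero_mul, zero_add]
    _ = besselSeries k t - (k + 1) * besselSeries (k + 1) t := by
        rw [besselSeries, besselSeries, ← tsum_mul_left, ← (summable_besselSeries k t).tsum_sub
          ((summable_besselSeries (k + 1) t).mul_left _)]
        exact tsum_congr fun m => by ring

theorem besselI_natCast (k : ℕ) (x : ℝ) :
    besselI k x = (x / 2) ^ k * besselSeries k (x ^ 2 / 4) := by
  rw [besselI, besselSeries, ← tsum_mul_left]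
  refine tsum_congr fun m => ?_
  rw [show 2 * (m : ℝ) + k = ((2 * m + k : ℕ) : ℝ) by push_cast; ring, Real.rpow_natCast,
    show (m : ℝ) + k + 1 = ((m + k : ℕ) : ℝ) + 1 by push_cast; ring,
    Real.Gamma_nat_eq_factorial, besselCoeff, pow_add, pow_mul]
  ring

theorem psi_zero_eq (x : ℝ) :
    psi 0 x = x / 2 * besselSeries 1 (x ^ 2 / 4) / besselSeries 0 (x ^ 2 / 4) := by
  have h₀ := besselI_natCast 0 x
  have h₁ := besselI_natCast 1 x
  rw [Nat.cast_zero, pow_zero, one_mul] at h₀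
  rw [Nat.cast_one, pow_one] at h₁
  rw [psi, zero_add, h₀, h₁]

theorem psi_zero_pos {x : ℝ} (hx : 0 < x) : 0 < psi 0 x := by
  have := besselSeries_pos 0 (t := x ^ 2 / 4) (by positivity)
  have := besselSeries_pos 1 (t := x ^ 2 / 4) (by positivity)
  rw [psi_zero_eq]
  positivity

theorem psi_zero_le_half {x : ℝ} (hx : 0 ≤ x) : psi 0 x ≤ x / 2 := by
  have hpos := besselSeries_pos 0 (t := x ^ 2 / 4) (by positivity)
  have hle := besselSeries_succ_le 0 (t := x ^ 2 / 4) (by positivity)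
  rw [psi_zero_eq, mul_div_assoc]
  exact mul_le_of_le_one_right (by positivity) ((div_le_one hpos).2 hle)

theorem hasDerivAt_psi_zero {x : ℝ} (hx : x ≠ 0) :
    HasDerivAt (psi 0) (1 - psi 0 x / x - psi 0 x ^ 2) x := by
  set t := x ^ 2 / 4
  have ht : HasDerivAt (fun y : ℝ => y ^ 2 / 4) (x / 2) x :=
    ((hasDerivAt_pow 2 x).div_const 4).congr_deriv (by push_cast; ring)
  have hF : HasDerivAt (fun y => besselSeries 0 (y ^ 2 / 4)) (besselSeries 1 t * (x / 2)) x :=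
    (hasDerivAt_besselSeries 0 t).comp (h₂ := besselSeries 0) x ht
  have hG : HasDerivAt (fun y => besselSeries 1 (y ^ 2 / 4)) (besselSeries 2 t * (x / 2)) x :=
    (hasDerivAt_besselSeries 1 t).comp (h₂ := besselSeries 1) x ht
  have hFpos : 0 < besselSeries 0 t := besselSeries_pos 0 (by positivity)
  have key := (((hasDerivAt_id' x).div_const 2).fun_mul hG).fun_div hF hFpos.ne'
  rw [show psi 0 = _ from funext psi_zero_eq]
  refine key.congr_deriv ?_
  have hrec := besselSeries_recurrence 0 t
  simp only [t] at hrec hFpos ⊢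
  field_simp
  linear_combination 4 * besselSeries 0 (x ^ 2 / 4) * hrec

theorem psi_zero_pow_four_lt_of_le_one {x : ℝ} (hx : 0 < x) (hx1 : x ≤ 1) :
    psi 0 x ^ 4 < 1 - 2 * psi 0 x / x := by
  set t := x ^ 2 / 4 with ht
  have ht0 : 0 < t := by positivity
  have ht1 : t ≤ 1 / 4 := by nlinarith
  have hF := besselSeries_pos 0 ht0.le
  have hFle : besselSeries 0 t ≤ 4 / 3 :=
    (besselSeries_le_inv_one_sub 0 ht0.le (by linarith)).trans
      ((inv_le_comm₀ (by linarith) (by norm_num)).2 (by linarith))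
  have hH : (1 / 2 : ℝ) ≤ besselSeries 2 t := by
    simpa [Nat.factorial] using inv_factorial_le_besselSeries 2 ht0.le
  -- `2 Ψ / x = S₁ / S₀ ≤ 1 - 3t/8` since `S₀ - S₁ = t S₂ ≥ t/2` and `S₀ ≤ 4/3`; and `Ψ⁴ ≤ t²`.
  have hrec := besselSeries_recurrence 0 t
  push_cast at hrec
  have hratio : 2 * psi 0 x / x = besselSeries 1 t / besselSeries 0 t := by
    rw [psi_zero_eq, ← ht]
    field_simp
  have hpow : psi 0 x ^ 4 ≤ t ^ 2 :=
    (pow_le_pow_left₀ (psi_zero_pos hx).le (psi_zero_le_half hx.le) 4).trans_eq (by ring)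
  have hGF : besselSeries 1 t / besselSeries 0 t ≤ 1 - 3 * t / 8 := by
    rw [div_le_iff₀ hF]
    nlinarith
  rw [hratio]
  nlinarith

theorem deriv_gap_pos_of_gap_eq_zero {a y : ℝ} (ha : 0 < a) (hy : 0 < y)
    (h : 1 - 2 * a / y - a ^ 4 = 0) :
    0 < -((2 * (1 - a / y - a ^ 2) * y - 2 * a) / y ^ 2) - 4 * a ^ 3 * (1 - a / y - a ^ 2) := by
  have ha4 : 0 < 1 - a ^ 4 := by
    have : 0 < 2 * a / y := by positivity
    linarith
  have ha2 : 0 < 1 - a ^ 2 := by nlinarith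
  have hya : y = 2 * a / (1 - a ^ 4) := by
    field_simp at h ⊢
    linarith
  have key : 0 < 2 * a ^ 2 * (1 - a ^ 2) ^ 3 := by positivity
  rw [hya]
  field_simp
  linear_combination key

theorem psi_zero_pow_four_lt {x : ℝ} (hx : 0 < x) : psi 0 x ^ 4 < 1 - 2 * psi 0 x / x := by
  rcases le_or_gt x 1 with hx1 | hx1
  · exact psi_zero_pow_four_lt_of_le_one hx hx1
  set p' := fun y => 1 - psi 0 y / y - psi 0 y ^ 2
  have hderiv : ∀ y, 1 ≤ y → HasDerivAt (fun y => 1 - 2 * psi 0 y / y - psi 0 y ^ 4)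
      (-((2 * p' y * y - 2 * psi 0 y) / y ^ 2) - 4 * psi 0 y ^ 3 * p' y) y := by
    intro y hy
    have hy0 : y ≠ 0 := by positivity
    have hp := hasDerivAt_psi_zero hy0
    refine (((hasDerivAt_const y 1).sub ((hp.const_mul 2).div (hasDerivAt_id' y) hy0)).sub
      (hp.pow 4)).congr_deriv ?_
    simp only [p']
    push_cast
    ring
  have hzero : ∀ y, 1 < y → 1 - 2 * psi 0 y / y - psi 0 y ^ 4 = 0 →
      0 < -((2 * p' y * y - 2 * psi 0 y) / y ^ 2) - 4 * psi 0 y ^ 3 * p' y :=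
    fun y hy hy0 => deriv_gap_pos_of_gap_eq_zero (psi_zero_pos (by linarith)) (by linarith) hy0
  have := pos_of_hasDerivAt_pos_at_zeros hderiv
    (by linarith [psi_zero_pow_four_lt_of_le_one one_pos le_rfl]) hzero hx1.le
  linarith

theorem stmt_3 (K r : ℝ) (hK : 1 < K) (hr : 0 < r)
    (heq : r = psi 0 (2 * K * r)) :
    r < (1 - 1 / K) ^ ((1 : ℝ) / 4) := by
  have h := psi_zero_pow_four_lt (x := 2 * K * r) (by positivity)
  rw [← heq, show 2 * r / (2 * K * r) = 1 / K by field_simp] at h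
  calc r = (r ^ 4) ^ ((1 : ℝ) / 4) := by
        rw [← Real.rpow_natCast, ← Real.rpow_mul hr.le]; norm_num
    _ < (1 - 1 / K) ^ ((1 : ℝ) / 4) := by gcongr
end
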